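/- arXiv:1905.13476 — 2 statements merged into one kernel-verified Lean document; each statement's English description precedes it below -/
import Mathlib

section
/- Let L = B Bᵀ be a real psd n×n matrix, L̂ = B P Bᵀ with P a real symmetric idempotent matrix, and suppose the quantities l_i = [L − L̂ + L̂(I + L̂)⁻¹]_{ii} are strictly positive for all i. Let ŝ = Σ_{i=1}^n l_i, s̃ = tr(L̂(I + L̂)⁻¹), and fix q > 0. For any t ≥ 0 and any sequence σ = (σ₁,…,σ_t) ∈ {1,…,n}^t, let Ã_σ be the t×t matrix with entries (Ã_σ)_{ab} = (ŝ/q) · L_{σ_a σ_b} / √(l_{σ_a} l_{σ_b}). Then det(I_t + Ã_σ) ≤ e^{t ŝ/q − s̃} · det(I_n + L̂). Consequently the acceptance probability e^{s̃} det(I + Ã_σ) / ( e^{t ŝ/q} det(I + L̂) ) used in the rejection sampling step of DPP-VFX is at most 1. -/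
/-!
Write `L̂ = C Cᵀ` with `C = B P` and let `K = (1 + CᵀC)⁻¹`. Since `CᵀC` is absorbed by `P` on
both sides, `K = 1 - P + P K P`, which together with the push-through identity
`C K Cᵀ = L̂ (1 + L̂)⁻¹` gives `l_i = (B K Bᵀ)_{ii}` and `s̃ = tr (C K Cᵀ)`. The kernel `Ã_σ` is
`V Vᵀ` where `V` consists of the rows `B_{σ_a}` scaled by `√(ŝ / (q l_{σ_a}))`, so
`tr (V K Vᵀ) = t ŝ / q`. By Sylvester's identity both determinants can be computed on the
`r × r` side, where `det X ≤ exp (tr (X D⁻¹) - r) det D` for `X = 1 + VᵀV`, `D = 1 + CᵀC`: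
this is `x ≤ exp (x - 1)` applied to the eigenvalues of `D^{-1/2} X D^{-1/2}`.
-/

open Matrix

namespace Matrix

variable {l m n ι : Type*}

theorem PosSemidef.det_le_exp_trace_sub_card [Fintype n] [DecidableEq n] {X : Matrix n n ℝ}
    (hX : X.PosSemidef) : X.det ≤ Real.exp (X.trace - Fintype.card n) := by
  rw [hX.isHermitian.det_eq_prod_eigenvalues, hX.isHermitian.trace_eq_sum_eigenvalues]
  calc ∏ i, (hX.isHermitian.eigenvalues i : ℝ)
      ≤ ∏ i, Real.exp (hX.isHermitian.eigenvalues i - 1) :=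
        Finset.prod_le_prod (fun i _ => hX.eigenvalues_nonneg i)
          fun i _ => by linarith [Real.add_one_le_exp (hX.isHermitian.eigenvalues i - 1)]
    _ = Real.exp (∑ i, (hX.isHermitian.eigenvalues i : ℝ) - Fintype.card n) := by
        simp [← Real.exp_sum, Finset.sum_sub_distrib]

open scoped MatrixOrder in
theorem PosSemidef.det_le_exp_trace_mul_inv_sub_card [Fintype n] [DecidableEq n]
    {X D : Matrix n n ℝ} (hX : X.PosSemidef) (hD : D.PosDef) :
    X.det ≤ Real.exp ((X * D⁻¹).trace - Fintype.card n) * D.det := by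
  set S := CFC.sqrt D
  have hSS : S * S = D := CFC.sqrt_mul_sqrt_self D hD.posSemidef.nonneg
  have hSherm : Sᴴ = S := (CFC.sqrt_nonneg D).posSemidef.1
  have hSdet : S.det * S.det = D.det := by rw [← det_mul, hSS]
  have hSdet0 : S.det ≠ 0 := fun h => hD.det_pos.ne' (by rw [← hSdet, h, zero_mul])
  have hM : (S⁻¹ * X * S⁻¹).PosSemidef := by
    have := hX.mul_mul_conjTranspose_same S⁻¹
    rwa [conjTranspose_nonsing_inv, hSherm] at this
  have hdet : X.det = (S⁻¹ * X * S⁻¹).det * D.det := by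
    rw [det_mul, det_mul, det_nonsing_inv, Ring.inverse_eq_inv, ← hSdet]
    field_simp
  have htrace : (S⁻¹ * X * S⁻¹).trace = (X * D⁻¹).trace := by
    rw [Matrix.mul_assoc, trace_mul_comm, Matrix.mul_assoc, ← Matrix.mul_inv_rev, hSS]
  rw [hdet, ← htrace]
  exact mul_le_mul_of_nonneg_right hM.det_le_exp_trace_sub_card hD.det_pos.le

theorem posDef_one_add_transpose_mul_self [Fintype m] [Fintype n] [DecidableEq n]
    (C : Matrix m n ℝ) : (1 + Cᵀ * C).PosDef := by
  rw [add_comm, ← conjTranspose_eq_transpose_of_trivial]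
  exact PosDef.posSemidef_add (posSemidef_conjTranspose_mul_self C) PosDef.one

theorem det_one_add_mul_transpose_le [Fintype l] [Fintype m] [Fintype ι] [DecidableEq l]
    [DecidableEq m] [DecidableEq ι] (C : Matrix m ι ℝ) (V : Matrix l ι ℝ) :
    (1 + V * Vᵀ).det ≤ Real.exp ((V * (1 + Cᵀ * C)⁻¹ * Vᵀ).trace
      - (C * (1 + Cᵀ * C)⁻¹ * Cᵀ).trace) * (1 + C * Cᵀ).det := by
  set K := (1 + Cᵀ * C)⁻¹
  have hD := posDef_one_add_transpose_mul_self C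
  have hX := posDef_one_add_transpose_mul_self V
  have hCK : Cᵀ * C * K = 1 - K := by
    have h : (1 + Cᵀ * C) * K = 1 := mul_nonsing_inv _ hD.det_pos.ne'.isUnit
    rw [Matrix.add_mul, Matrix.one_mul] at h
    rw [eq_sub_iff_add_eq, add_comm, h]
  have htrace : ((1 + Vᵀ * V) * K).trace - Fintype.card ι
      = (V * K * Vᵀ).trace - (C * K * Cᵀ).trace := by
    rw [Matrix.add_mul, Matrix.one_mul, trace_add, trace_mul_comm (C * K), ← Matrix.mul_assoc,
      hCK, trace_sub, trace_one, Matrix.mul_assoc Vᵀ, trace_mul_comm Vᵀ]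
    ring
  rw [det_one_add_mul_comm, det_one_add_mul_comm C, ← htrace]
  exact hX.posSemidef.det_le_exp_trace_mul_inv_sub_card hD

theorem mul_inv_one_add_mul_comm [Fintype m] [Fintype n] [DecidableEq m] [DecidableEq n]
    {R : Type*} [CommRing R] (A : Matrix m n R) (B : Matrix n m R)
    (h : IsUnit (1 + B * A).det) : B * (1 + A * B)⁻¹ = (1 + B * A)⁻¹ * B := by
  have h' : IsUnit (1 + A * B).det := by rwa [det_one_add_mul_comm]
  have hcomm : B * (1 + A * B) = (1 + B * A) * B := by
    simp only [Matrix.mul_add, Matrix.add_mul, Matrix.mul_one, Matrix.one_mul, Matrix.mul_assoc]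
  calc B * (1 + A * B)⁻¹ = (1 + B * A)⁻¹ * (1 + B * A) * B * (1 + A * B)⁻¹ := by
        rw [nonsing_inv_mul _ h, Matrix.one_mul]
    _ = (1 + B * A)⁻¹ * B := by
        rw [Matrix.mul_assoc _ _ B, ← hcomm, Matrix.mul_assoc, Matrix.mul_assoc,
          mul_nonsing_inv _ h', Matrix.mul_one]

theorem mul_inv_one_add_transpose_mul_self_mul_transpose [Fintype m] [Fintype n]
    [DecidableEq m] [DecidableEq n] (C : Matrix m n ℝ) :
    C * (1 + Cᵀ * C)⁻¹ * Cᵀ = C * Cᵀ * (1 + C * Cᵀ)⁻¹ := by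
  rw [Matrix.mul_assoc, Matrix.mul_assoc,
    mul_inv_one_add_mul_comm C Cᵀ (posDef_one_add_transpose_mul_self C).det_pos.ne'.isUnit]

theorem inv_one_add_eq_of_idempotent [Fintype n] [DecidableEq n] {R : Type*} [CommRing R]
    {P W : Matrix n n R} (hP : P * P = P) (hPW : P * W = W) (hWP : W * P = W)
    (h : IsUnit (1 + W).det) : (1 + W)⁻¹ = 1 - P + P * (1 + W)⁻¹ * P := by
  have hcomm : (1 + W) * P = P * (1 + W) := by
    rw [Matrix.mul_add, Matrix.add_mul, hPW, hWP, Matrix.one_mul, Matrix.mul_one]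
  refine inv_eq_right_inv ?_
  rw [Matrix.mul_add, Matrix.mul_sub, ← Matrix.mul_assoc, ← Matrix.mul_assoc, hcomm,
    Matrix.mul_assoc P, mul_nonsing_inv _ h]
  simp only [Matrix.mul_one, hP, Matrix.mul_add, hPW]
  abel

theorem mul_mul_transpose_eq_of_idempotent [Fintype n] (B : Matrix m n ℝ) {P : Matrix n n ℝ}
    (hPsym : Pᵀ = P) (hP : P * P = P) : B * P * Bᵀ = B * P * (B * P)ᵀ := by
  rw [transpose_mul, hPsym, ← Matrix.mul_assoc, Matrix.mul_assoc B P P, hP]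

theorem mul_inv_one_add_mul_transpose_eq [Fintype m] [Fintype n] [DecidableEq n]
    (B : Matrix m n ℝ) {P : Matrix n n ℝ} (hPsym : Pᵀ = P) (hP : P * P = P) :
    B * (1 + (B * P)ᵀ * (B * P))⁻¹ * Bᵀ
      = B * Bᵀ - B * P * (B * P)ᵀ + B * P * (1 + (B * P)ᵀ * (B * P))⁻¹ * (B * P)ᵀ := by
  have hBP : (B * P)ᵀ = P * Bᵀ := by rw [transpose_mul, hPsym]
  have hinv := inv_one_add_eq_of_idempotent hP
    (by simp only [hBP, ← Matrix.mul_assoc, hP])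
    (by rw [Matrix.mul_assoc, Matrix.mul_assoc, hP])
    (posDef_one_add_transpose_mul_self (B * P)).det_pos.ne'.isUnit
  conv_lhs => rw [hinv]
  rw [hBP]
  simp only [Matrix.mul_add, Matrix.mul_sub, Matrix.add_mul, Matrix.sub_mul, Matrix.mul_one,
    Matrix.mul_assoc]
  rw [← Matrix.mul_assoc P P, hP]

theorem diagonal_mul_submatrix_mul_mul_transpose_apply [Fintype l] [Fintype ι] [DecidableEq l]
    {R : Type*} [CommRing R] (g : l → R) (σ : l → m) (B : Matrix m ι R) (K : Matrix ι ι R)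
    (a b : l) :
    (diagonal g * B.submatrix σ id * K * (diagonal g * B.submatrix σ id)ᵀ) a b
      = g a * g b * (B * K * Bᵀ) (σ a) (σ b) := by
  rw [transpose_mul, diagonal_transpose, ← Matrix.mul_assoc, mul_diagonal, Matrix.mul_assoc,
    Matrix.mul_assoc, diagonal_mul, Matrix.mul_assoc B]
  simp only [mul_apply, submatrix_apply, transpose_apply, id]
  ring

noncomputable def rescaledRows [Fintype l] [DecidableEq l] (c : ℝ) (w : m → ℝ) (σ : l → m)
    (B : Matrix m ι ℝ) : Matrix l ι ℝ :=
  diagonal (fun a => √(c / w (σ a))) * B.submatrix σ id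

theorem rescaledRows_mul_mul_transpose_apply [Fintype l] [Fintype ι] [DecidableEq l] {c : ℝ}
    (hc : 0 ≤ c) (w : m → ℝ) (σ : l → m) (B : Matrix m ι ℝ) (K : Matrix ι ι ℝ) (a b : l) :
    (rescaledRows c w σ B * K * (rescaledRows c w σ B)ᵀ) a b
      = c * (B * K * Bᵀ) (σ a) (σ b) / (√(w (σ a)) * √(w (σ b))) := by
  rw [rescaledRows, diagonal_mul_submatrix_mul_mul_transpose_apply, Real.sqrt_div hc,
    Real.sqrt_div hc, div_mul_div_comm, Real.mul_self_sqrt hc]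
  ring

theorem trace_rescaledRows_mul_mul_transpose [Fintype l] [Fintype ι] [DecidableEq l] {c : ℝ}
    (hc : 0 ≤ c) (σ : l → m) (B : Matrix m ι ℝ) (K : Matrix ι ι ℝ) {w : m → ℝ}
    (hw : ∀ i, w i = (B * K * Bᵀ) i i) (hwpos : ∀ i, 0 < w i) :
    (rescaledRows c w σ B * K * (rescaledRows c w σ B)ᵀ).trace = Fintype.card l * c := by
  have hdiag : ∀ a, c * w (σ a) / (√(w (σ a)) * √(w (σ a))) = c := fun a => by
    rw [Real.mul_self_sqrt (hwpos _).le, mul_div_cancel_right₀ _ (hwpos _).ne']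
  simp only [trace, diag, rescaledRows_mul_mul_transpose_apply hc, ← hw, hdiag,
    Finset.sum_const, Finset.card_univ, nsmul_eq_mul]

end Matrix

/-- With `L = B Bᵀ`, `L̂ = B P Bᵀ` (`P` symmetric idempotent), strictly
positive approximate leverage scores `l_i = [L - L̂ + L̂ (1 + L̂)⁻¹]_{ii}`, `ŝ = Σᵢ l_i`,
`s̃ = tr (L̂ (1 + L̂)⁻¹)` and `q > 0`: for any `t` and sequence `σ ∈ [n]^t`, the rescaled
kernel `Ã_σ` with `(Ã_σ)_{ab} = (ŝ/q) L_{σ_a σ_b} / √(l_{σ_a} l_{σ_b})` satisfies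
`det (1 + Ã_σ) ≤ e^{t ŝ / q - s̃} det (1 + L̂)`; hence the acceptance probability of
DPP-VFX is at most `1`. -/
theorem acceptance_prob_le_one {n r : ℕ} (B : Matrix (Fin n) (Fin r) ℝ)
    (P : Matrix (Fin r) (Fin r) ℝ) (hPsym : Pᵀ = P) (hPidem : P * P = P)
    (L Lhat : Matrix (Fin n) (Fin n) ℝ) (hL : L = B * Bᵀ) (hLhat : Lhat = B * P * Bᵀ)
    (l : Fin n → ℝ) (hl : ∀ i, l i = (L - Lhat + Lhat * (1 + Lhat)⁻¹) i i)
    (hlpos : ∀ i, 0 < l i)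
    (shat stil q : ℝ) (hshat : shat = ∑ i, l i)
    (hstil : stil = (Lhat * (1 + Lhat)⁻¹).trace) (hq : 0 < q)
    (t : ℕ) (σ : Fin t → Fin n) (Atil : Matrix (Fin t) (Fin t) ℝ)
    (hAtil : ∀ a b, Atil a b
        = shat / q * L (σ a) (σ b) / Real.sqrt (l (σ a) * l (σ b))) :
    (1 + Atil).det ≤ Real.exp ((t : ℝ) * shat / q - stil) * (1 + Lhat).det
    ∧ Real.exp stil * (1 + Atil).det
        / (Real.exp ((t : ℝ) * shat / q) * (1 + Lhat).det) ≤ 1 := by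
  set C := B * P
  have hLhatC : Lhat = C * Cᵀ := hLhat.trans (mul_mul_transpose_eq_of_idempotent B hPsym hPidem)
  have hCKC := mul_inv_one_add_transpose_mul_self_mul_transpose C
  rw [← hLhatC] at hCKC
  have hlK : ∀ i, l i = (B * (1 + Cᵀ * C)⁻¹ * Bᵀ : Matrix (Fin n) (Fin n) ℝ) i i := fun i => by
    rw [hl, ← hCKC, hL, hLhatC, mul_inv_one_add_mul_transpose_eq B hPsym hPidem]
  have hc : 0 ≤ shat / q := div_nonneg (hshat ▸ Finset.sum_nonneg fun i _ => (hlpos i).le) hq.le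
  set V := rescaledRows (shat / q) l σ B
  have hAtilV : Atil = V * Vᵀ := by
    ext a b
    simpa [hAtil, hL, Real.sqrt_mul (hlpos _).le] using
      (rescaledRows_mul_mul_transpose_apply hc l σ B 1 a b).symm
  have hdet := det_one_add_mul_transpose_le C V
  rw [← hAtilV, trace_rescaledRows_mul_mul_transpose hc σ B _ hlK hlpos, hCKC, ← hstil,
    ← hLhatC, Fintype.card_fin, ← mul_div_assoc] at hdet
  refine ⟨hdet, ?_⟩
  have hLdet : 0 < (1 + Lhat).det := by
    rw [hLhatC, det_one_add_mul_comm]; exact (posDef_one_add_transpose_mul_self C).det_pos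
  rw [div_le_one (by positivity)]
  calc _ ≤ Real.exp stil * (Real.exp (t * shat / q - stil) * (1 + Lhat).det) := by gcongr
    _ = _ := by rw [← mul_assoc, ← Real.exp_add, add_sub_cancel]
end

section
/- Let L be a real positive semidefinite n×n matrix. Then Σ_{S ⊆ {1,…,n}} |S| · det(L_S) = det(I + L) · tr( L (I + L)⁻¹ ), where L_S is the principal submatrix of L indexed by S. Consequently, if S ∼ DPP(L) then the expected subset size E[|S|] equals the 1-effective dimension d_eff(1) = tr(L(I + L)⁻¹). -/
/-!
Write `|S| = ∑ i, [i ∈ S]`, so that the claim is a sum over `i` of the weights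
`∑_{S ∋ i} det L_S`. Expanding the determinant row by row, `det (1 + L) = ∑_S det L_S`, and
the same expansion of the cofactor `adj (1 + L) i i` (row `i` of `1 + L` replaced by `eᵢ`)
keeps exactly the `S ∌ i`. Hence `∑_{S ∋ i} det L_S = det (1 + L) - adj (1 + L) i i`, and
summing over `i` gives `tr (L * adj (1 + L)) = det (1 + L) * tr (L (1 + L)⁻¹)`.
-/

open Matrix Finset

namespace Matrix

variable {ι R : Type*} [Fintype ι] [DecidableEq ι] [CommRing R]

theorem det_one_add_eq_sum_det_submatrix (M : Matrix ι ι R) :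
    det (1 + M) = ∑ S : Finset ι, (M.submatrix ((↑) : S → ι) (↑)).det := by
  rw [add_comm, ← sum_congr rfl fun S _ => det_piecewise_one_eq_submatrix_det M S]
  -- the identity matrix, not the constant function `1 : ι → ι → R`
  exact detRowAlternating.map_add_univ M (1 : Matrix ι ι R)

theorem adjugate_one_add_apply_self (M : Matrix ι ι R) (i : ι) :
    adjugate (1 + M) i i = ∑ S : Finset ι with i ∉ S, (M.submatrix ((↑) : S → ι) (↑)).det := by
  have hrow : (1 + M).updateRow i (Pi.single i 1) = 1 + M.updateRow i 0 := by
    ext j k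
    by_cases hj : j = i
    · subst hj
      simp [one_apply, Pi.single_apply, eq_comm]
    · simp [updateRow_ne hj]
  rw [adjugate_apply, hrow, det_one_add_eq_sum_det_submatrix, sum_filter]
  refine sum_congr rfl fun S _ => ?_
  split_ifs with hi
  · exact det_eq_zero_of_row_eq_zero (⟨i, hi⟩ : S) fun j => by simp
  · congr 1
    ext a b
    simp [updateRow_ne (ne_of_mem_of_not_mem a.2 hi)]

theorem sum_det_submatrix_of_mem (M : Matrix ι ι R) (i : ι) :
    ∑ S : Finset ι with i ∈ S, (M.submatrix ((↑) : S → ι) (↑)).det =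
      det (1 + M) - adjugate (1 + M) i i := by
  rw [adjugate_one_add_apply_self, det_one_add_eq_sum_det_submatrix,
    ← sum_filter_add_sum_filter_not univ (i ∈ ·), add_sub_cancel_right]

theorem sum_card_mul_det_submatrix (M : Matrix ι ι R) :
    ∑ S : Finset ι, (#S : R) * (M.submatrix ((↑) : S → ι) (↑)).det =
      trace (M * adjugate (1 + M)) := by
  have htrace : trace (M * adjugate (1 + M)) = ∑ i, (det (1 + M) - adjugate (1 + M) i i) := by
    calc trace (M * adjugate (1 + M))
        = trace ((1 + M) * adjugate (1 + M) - adjugate (1 + M)) := by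
          rw [add_mul, one_mul, add_sub_cancel_left]
      _ = _ := by simp [mul_adjugate, trace, sum_sub_distrib]
  calc ∑ S : Finset ι, (#S : R) * (M.submatrix ((↑) : S → ι) (↑)).det
      = ∑ i, ∑ S : Finset ι with i ∈ S, (M.submatrix ((↑) : S → ι) (↑)).det := by
        simp_rw [sum_filter]
        rw [sum_comm]
        refine sum_congr rfl fun S _ => ?_
        simp
    _ = trace (M * adjugate (1 + M)) := by
        simp_rw [sum_det_submatrix_of_mem, htrace]

theorem adjugate_eq_det_smul_inv (A : Matrix ι ι R) (h : IsUnit A.det) :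
    adjugate A = A.det • A⁻¹ := by
  rw [inv_def, smul_smul, Ring.mul_inverse_cancel _ h, one_smul]

end Matrix

/-- For a psd `n × n` matrix `L`,
`Σ_{S ⊆ [n]} |S| det (L_S) = det (1 + L) * tr (L (1 + L)⁻¹)`; consequently the expected
subset size of `DPP(L)` equals the 1-effective dimension `d_eff(1) = tr (L (1 + L)⁻¹)`. -/
theorem dpp_expected_size_eq_deff {n : ℕ} (L : Matrix (Fin n) (Fin n) ℝ)
    (hL : L.PosSemidef) :
    ∑ S : Finset (Fin n),
        (S.card : ℝ) * (L.submatrix (Subtype.val : {x // x ∈ S} → Fin n) Subtype.val).det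
      = (1 + L).det * (L * (1 + L)⁻¹).trace := by
  have hdet : IsUnit (1 + L).det := (PosDef.one.add_posSemidef hL).det_pos.ne'.isUnit
  rw [sum_card_mul_det_submatrix, adjugate_eq_det_smul_inv _ hdet, Matrix.mul_smul, trace_smul,
    smul_eq_mul]
end
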